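/- Let G be a Hermitian unitary, V = exp(-i(θ/2)G), and O an operator anticommuting with G. If θ ~ N(0, σ²), then E_θ[Tr[O V ρ V†]] = e^{-σ²/2} Tr[O ρ]. -/

import Mathlib

open Matrix MeasureTheory Real

/-- Gaussian density with mean `μ` and variance `σ²`. -/
noncomputable def gaussDensity (σ μ x : ℝ) : ℝ :=
  (1 / (Real.sqrt (2 * Real.pi) * σ)) * Real.exp (-(x - μ) ^ 2 / (2 * σ ^ 2))

/-- The rotation `V = exp(-i(θ/2)G) = cos(θ/2)·I - i sin(θ/2)·G` generated by a
Hermitian unitary `G`. -/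
noncomputable def rotGate {n : ℕ} (G : Matrix (Fin n) (Fin n) ℂ) (θ : ℝ) :
    Matrix (Fin n) (Fin n) ℂ :=
  (Complex.cos ((θ : ℂ) / 2)) • (1 : Matrix (Fin n) (Fin n) ℂ)
    - (Complex.I * Complex.sin ((θ : ℂ) / 2)) • G

/-! Because `O` anticommutes with `G`, `O * V θ = V (-θ) * O`; because `G` is a Hermitian
involution, `V θ` is a one-parameter group with `(V θ)ᴴ = V (-θ)`. Cycling the trace therefore
gives `Tr[O V ρ V†] = Tr[V (-2θ) O ρ] = cos θ Tr[O ρ] + sin θ Tr[i G O ρ]`. The Gaussian density is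
that of `gaussianReal 0 σ²`, and the means of `cos θ` and `sin θ` under it are the real and
imaginary parts of its characteristic function at `1`, namely `e^{-σ²/2}` and `0`. -/

open scoped NNReal
open ProbabilityTheory

section RotGate

variable {n : ℕ} {G : Matrix (Fin n) (Fin n) ℂ}

lemma rotGate_add (hG : G * G = 1) (a b : ℝ) :
    rotGate G (a + b) = rotGate G a * rotGate G b := by
  simp only [rotGate, Matrix.sub_mul, Matrix.mul_sub, Matrix.smul_mul, Matrix.mul_smul,
    Matrix.one_mul, Matrix.mul_one, hG]
  push_cast
  rw [add_div, Complex.cos_add, Complex.sin_add]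
  match_scalars
  · linear_combination -(Complex.sin (a / 2) * Complex.sin (b / 2)) * Complex.I_sq
  · ring

lemma conjTranspose_rotGate (hG : Gᴴ = G) (θ : ℝ) : (rotGate G θ)ᴴ = rotGate G (-θ) := by
  simp only [rotGate, conjTranspose_sub, conjTranspose_smul, conjTranspose_one, hG]
  simp [← Complex.cos_conj, ← Complex.sin_conj, map_ofNat, neg_div, Complex.cos_neg,
    Complex.sin_neg]

lemma mul_rotGate_of_anticomm {O : Matrix (Fin n) (Fin n) ℂ} (hOG : O * G + G * O = 0)
    (θ : ℝ) : O * rotGate G θ = rotGate G (-θ) * O := by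
  simp only [rotGate, Matrix.sub_mul, Matrix.mul_sub, Matrix.smul_mul, Matrix.mul_smul,
    Matrix.one_mul, Matrix.mul_one, eq_neg_of_add_eq_zero_left hOG]
  push_cast
  simp [neg_div, Complex.cos_neg, Complex.sin_neg]

lemma rotGate_neg_add_neg (θ : ℝ) :
    rotGate G (-θ + -θ) = (Real.cos θ : ℂ) • 1 + (Complex.I * Real.sin θ) • G := by
  simp [rotGate, Complex.cos_neg, Complex.sin_neg, sub_eq_add_neg]

lemma trace_mul_rotGate_mul_conjTranspose (hGherm : Gᴴ = G) (hGunit : G * G = 1)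
    {O : Matrix (Fin n) (Fin n) ℂ} (hanti : O * G + G * O = 0) (ρ : Matrix (Fin n) (Fin n) ℂ)
    (θ : ℝ) :
    (O * rotGate G θ * ρ * (rotGate G θ)ᴴ).trace
      = Real.cos θ * (O * ρ).trace + Real.sin θ * (Complex.I * (G * O * ρ).trace) := by
  have hconj : (rotGate G θ)ᴴ * (O * rotGate G θ) = rotGate G (-θ + -θ) * O := by
    rw [conjTranspose_rotGate hGherm, mul_rotGate_of_anticomm hanti, ← Matrix.mul_assoc,
      ← rotGate_add hGunit]
  rw [trace_mul_comm, ← Matrix.mul_assoc, ← Matrix.mul_assoc, Matrix.mul_assoc _ O, hconj,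
    rotGate_neg_add_neg]
  simp only [Matrix.add_mul, Matrix.smul_mul, Matrix.one_mul, trace_add, trace_smul, smul_eq_mul]
  ring

end RotGate

lemma gaussDensity_eq_gaussianPDFReal {σ : ℝ} (hσ : 0 ≤ σ) (μ : ℝ) :
    gaussDensity σ μ = gaussianPDFReal μ (σ ^ 2).toNNReal := by
  ext x
  rw [gaussDensity, gaussianPDFReal, Real.coe_toNNReal _ (sq_nonneg σ),
    Real.sqrt_mul (by positivity) (σ ^ 2), Real.sqrt_sq hσ, one_div]

lemma integral_gaussDensity_smul {E : Type*} [NormedAddCommGroup E] [NormedSpace ℝ E]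
    {σ : ℝ} (hσ : 0 < σ) (μ : ℝ) (f : ℝ → E) :
    ∫ x, gaussDensity σ μ x • f x = ∫ x, f x ∂gaussianReal μ (σ ^ 2).toNNReal := by
  rw [integral_gaussianReal_eq_integral_smul, gaussDensity_eq_gaussianPDFReal hσ.le]
  positivity

lemma integrable_cexp_mul_I (ν : Measure ℝ) [IsFiniteMeasure ν] (t : ℝ) :
    Integrable (fun x : ℝ ↦ Complex.exp (t * x * Complex.I)) ν :=
  .of_bound (by fun_prop) 1 (ae_of_all _ fun x ↦ by
    simp [← Complex.ofReal_mul, Complex.norm_exp_ofReal_mul_I])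

lemma integral_cos_mul_gaussianReal (μ : ℝ) (v : ℝ≥0) (t : ℝ) :
    ∫ x, Real.cos (t * x) ∂gaussianReal μ v = Real.exp (-(v * t ^ 2 / 2)) * Real.cos (t * μ) := by
  have h := congrArg Complex.re (charFun_gaussianReal (μ := μ) (v := v) t)
  rw [charFun_apply_real, ← RCLike.re_to_complex, ← integral_re (integrable_cexp_mul_I _ t)] at h
  simpa [← Complex.ofReal_mul, ← Complex.ofReal_pow, Complex.exp_re] using h

lemma integral_sin_mul_gaussianReal (μ : ℝ) (v : ℝ≥0) (t : ℝ) :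
    ∫ x, Real.sin (t * x) ∂gaussianReal μ v = Real.exp (-(v * t ^ 2 / 2)) * Real.sin (t * μ) := by
  have h := congrArg Complex.im (charFun_gaussianReal (μ := μ) (v := v) t)
  rw [charFun_apply_real, ← RCLike.im_to_complex, ← integral_im (integrable_cexp_mul_I _ t)] at h
  simpa [← Complex.ofReal_mul, ← Complex.ofReal_pow, Complex.exp_im] using h

lemma integral_cos_mul_add_sin_mul_gaussianReal (v : ℝ≥0) (a b : ℂ) :
    ∫ θ, ((Real.cos θ : ℂ) * a + Real.sin θ * b) ∂gaussianReal 0 v = Real.exp (-(v / 2)) * a := by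
  have hcos : Integrable (fun θ ↦ (Real.cos θ : ℂ)) (gaussianReal 0 v) :=
    .of_bound (by fun_prop) 1 (ae_of_all _ fun θ ↦ by
      rw [Complex.norm_real, Real.norm_eq_abs]; exact Real.abs_cos_le_one θ)
  have hsin : Integrable (fun θ ↦ (Real.sin θ : ℂ)) (gaussianReal 0 v) :=
    .of_bound (by fun_prop) 1 (ae_of_all _ fun θ ↦ by
      rw [Complex.norm_real, Real.norm_eq_abs]; exact Real.abs_sin_le_one θ)
  rw [integral_add (hcos.mul_const a) (hsin.mul_const b), integral_mul_const, integral_mul_const,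
    integral_complex_ofReal, integral_complex_ofReal]
  simpa using congrArg₂ (fun c s : ℝ ↦ (c : ℂ) * a + s * b)
    (integral_cos_mul_gaussianReal 0 v 1) (integral_sin_mul_gaussianReal 0 v 1)

theorem gaussian_expectation_trace_conj {n : ℕ} (σ : ℝ) (hσ : 0 < σ)
    (G O ρ : Matrix (Fin n) (Fin n) ℂ)
    (hGherm : Gᴴ = G) (hGunit : G * G = 1)
    (hanti : O * G + G * O = 0) :
    ∫ θ : ℝ, (gaussDensity σ 0 θ : ℂ) * (O * rotGate G θ * ρ * (rotGate G θ)ᴴ).trace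
      = (Real.exp (-σ ^ 2 / 2) : ℂ) * (O * ρ).trace := by
  calc _ = ∫ θ, (O * rotGate G θ * ρ * (rotGate G θ)ᴴ).trace
        ∂gaussianReal 0 (σ ^ 2).toNNReal := by
        simp_rw [← integral_gaussDensity_smul hσ, Complex.real_smul]
    _ = _ := by
        simp_rw [trace_mul_rotGate_mul_conjTranspose hGherm hGunit hanti,
          integral_cos_mul_add_sin_mul_gaussianReal, Real.coe_toNNReal _ (sq_nonneg σ), neg_div]
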